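/- Let i, j ∈ ℕ with i − j ∈ 2ℕ+1 and set (r, r′) = (−ρ−i, −ρ′−j), so (r, r′) ∈ L_odd. Then: (i) every admissible solution t for (r, r′) satisfies t(α, α′) = 0 whenever α ≤ i or α′ > j; (ii) for every c ∈ ℂ there exists a unique admissible solution t for (r, r′) with t(i+1, j) = c. -/

import Mathlib

noncomputable section

/-- ρ = (n-1)/2 as a complex number. -/
def rho (n : ℕ) : ℂ := ((n : ℂ) - 1) / 2

/-- ρ' = (n-2)/2 as a complex number. -/
def rho' (n : ℕ) : ℂ := ((n : ℂ) - 2) / 2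

/-- A diagonal sequence for `(r, r')`. -/
def IsDiagSeq (n : ℕ) (r r' : ℂ) (s : ℕ → ℂ) : Prop :=
  ∀ α : ℕ, (2*r' + 2*(α : ℂ) + (n : ℂ) - 2) * s α
    = (2*r + 2*(α : ℂ) + (n : ℂ) - 1) * s (α + 1)

/-- L_even. -/
def Leven (n : ℕ) : Set (ℂ × ℂ) :=
  {p | ∃ i j : ℕ, p.1 = -rho n - (i : ℂ) ∧ p.2 = -rho' n - (j : ℂ) ∧ ∃ k : ℕ, i = j + 2*k}

/-- L_odd. -/
def Lodd (n : ℕ) : Set (ℂ × ℂ) :=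
  {p | ∃ i j : ℕ, p.1 = -rho n - (i : ℂ) ∧ p.2 = -rho' n - (j : ℂ) ∧ ∃ k : ℕ, i = j + 2*k + 1}

/-- An admissible solution `t : ℕ × ℕ → ℂ` for `(r, r')`:
`t(α,α') = 0` when `α' > α` or `α − α'` is odd (equivalently `α + α'` is odd),
and the relations (R1), (R2) hold for all `α ≥ α'` with `α − α'` even.
The natural-subtraction index `α - 1` is harmless, since in (R1) its coefficient
`(α − α')` vanishes when `α = α'`, and in (R2) we have `α ≥ α' ≥ 1`. -/
def IsAdmissible (n : ℕ) (r r' : ℂ) (t : ℕ → ℕ → ℂ) : Prop :=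
  (∀ α α' : ℕ, (α < α' ∨ Odd (α + α')) → t α α' = 0) ∧
  (∀ α α' : ℕ, α' ≤ α → Even (α + α') →
    ((2*(α : ℂ) + (n : ℂ) - 2) * (2*r' + 2*(α' : ℂ) + (n : ℂ) - 2) * t α α'
      = ((α : ℂ) + (α' : ℂ) + (n : ℂ) - 2) * (2*r + 2*(α : ℂ) + (n : ℂ) - 1)
          * t (α + 1) (α' + 1)
        + ((α : ℂ) - (α' : ℂ)) * (2*r - 2*(α : ℂ) - (n : ℂ) + 3)
          * t (α - 1) (α' + 1)) ∧
    (1 ≤ α' →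
      (2*(α : ℂ) + (n : ℂ) - 2) * (2*r' - 2*(α' : ℂ) - (n : ℂ) + 4) * t α α'
      = ((α : ℂ) - (α' : ℂ) + 1) * (2*r + 2*(α : ℂ) + (n : ℂ) - 1)
          * t (α + 1) (α' - 1)
        + ((α : ℂ) + (α' : ℂ) + (n : ℂ) - 3) * (2*r - 2*(α : ℂ) - (n : ℂ) + 3)
          * t (α - 1) (α' - 1)))

/-!
At `(r, r') = (-ρ - i, -ρ' - j)` every coefficient of (R1) and (R2) factors into linear forms in
`α, α'` that, for `α ≥ α'`, vanish only on the lines `α = i`, `α' = j` and `α = α'`; the relations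
thereby become a propagation scheme. Column `i` vanishes by descending induction on `α'`, and (R2)
carries this to every column `α < i`. Column `i + 1` then obeys a two-term recurrence
`α' ↦ α' + 2` that degenerates only at `α' = j`: it vanishes above row `j` and is a multiple of
`t (i + 1) j` below it. Finally (R2), solved for `t (α + 2) α'`, determines each later column from
the two before it. Conversely, defining `t` by these recurrences gives (R2) by construction, and
(R1) follows once its combination with (R2) within a single column is propagated from column
`i + 1` onwards.
-/

/-- (R1) and (R2) at `(r, r') = (-ρ - i, -ρ' - j)`, with the common factor `±2` cancelled;
(R2) is shifted to `(α, α') = (a + 1, q + 1)` to avoid truncated subtraction. -/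
structure IsReducedSolution (n i j : ℕ) (t : ℕ → ℕ → ℂ) : Prop where
  support : ∀ a p : ℕ, a < p ∨ (a + p) % 2 = 1 → t a p = 0
  rel₁ : ∀ a p : ℕ, p ≤ a → (a + p) % 2 = 0 →
    (2 * (a : ℂ) + n - 2) * ((p : ℂ) - j) * t a p
      = ((a : ℂ) + p + n - 2) * ((a : ℂ) - i) * t (a + 1) (p + 1)
        - ((a : ℂ) - p) * ((a : ℂ) + i + n - 2) * t (a - 1) (p + 1)
  rel₂ : ∀ a q : ℕ, q ≤ a → (a + q) % 2 = 0 →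
    (2 * (a : ℂ) + n) * ((q : ℂ) + j + n - 2) * t (a + 1) (q + 1)
      + ((a : ℂ) - q + 1) * ((a : ℂ) + 1 - i) * t (a + 2) q
      = ((a : ℂ) + q + n - 1) * ((a : ℂ) + i + n - 1) * t a q

theorem isAdmissible_iff {n i j : ℕ} {t : ℕ → ℕ → ℂ} :
    IsAdmissible n (-rho n - i) (-rho' n - j) t ↔ IsReducedSolution n i j t := by
  simp only [IsAdmissible, rho, rho', Nat.odd_iff, Nat.even_iff]
  constructor
  · rintro ⟨hsupp, hrel⟩
    refine ⟨hsupp, fun a p hpa hev => ?_, fun a q hqa hev => ?_⟩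
    · linear_combination (hrel a p hpa hev).1 / 2
    · have h := (hrel (a + 1) (q + 1) (by omega) (by omega)).2 (by omega)
      simp only [Nat.add_sub_cancel] at h
      push_cast at h
      linear_combination -h / 2
  · rintro ⟨hsupp, hrel₁, hrel₂⟩
    refine ⟨hsupp, fun a p hpa hev => ⟨by linear_combination 2 * hrel₁ a p hpa hev, fun hp => ?_⟩⟩
    obtain ⟨q, rfl⟩ : ∃ q, p = q + 1 := ⟨p - 1, by omega⟩
    obtain ⟨b, rfl⟩ : ∃ b, a = b + 1 := ⟨a - 1, by omega⟩
    simp only [Nat.add_sub_cancel]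
    push_cast
    linear_combination -2 * hrel₂ b q (by omega) (by omega)

namespace IsReducedSolution

variable {n i j : ℕ} {t : ℕ → ℕ → ℂ}

theorem sub {s : ℕ → ℕ → ℂ} (ht : IsReducedSolution n i j t) (hs : IsReducedSolution n i j s) :
    IsReducedSolution n i j (t - s) where
  support a p h := by simp [ht.support a p h, hs.support a p h]
  rel₁ a p h₁ h₂ := by
    simp only [Pi.sub_apply]
    linear_combination ht.rel₁ a p h₁ h₂ - hs.rel₁ a p h₁ h₂
  rel₂ a q h₁ h₂ := by
    simp only [Pi.sub_apply]
    linear_combination ht.rel₂ a q h₁ h₂ - hs.rel₂ a q h₁ h₂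

variable (hn : 3 ≤ n) (hji : j < i) (hpar : (i + j) % 2 = 1) (ht : IsReducedSolution n i j t)
include hn hji hpar ht

theorem apply_i_eq_zero (p : ℕ) : t i p = 0 := by
  obtain ⟨a, rfl⟩ : ∃ a, i = a + 1 := ⟨i - 1, by omega⟩
  induction p using Nat.strong_decreasing_induction with
  | base => exact ⟨a + 1, fun p hp => ht.support _ _ (Or.inl hp)⟩
  | step p ih =>
    by_cases hp : a + 1 < p ∨ (a + 1 + p) % 2 = 1
    · exact ht.support _ _ hp
    have hleft : t a (p + 1) = 0 := by
      by_cases hpa : a < p + 1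
      · exact ht.support _ _ (Or.inl hpa)
      -- in this instance of (R2) the column-`(i + 1)` term has coefficient `a + 1 - i = 0`
      have h := ht.rel₂ a (p + 1) (by omega) (by omega)
      rw [ih (p + 2) (by omega)] at h
      push_cast at h
      have key : ((a : ℂ) + (p + 1) + n - 1) * ((a : ℂ) + (a + 1) + n - 1) * t a (p + 1) = 0 := by
        linear_combination -h
      exact eq_zero_of_ne_zero_of_mul_left_eq_zero
        (mul_ne_zero (by exact_mod_cast (by omega : (a : ℤ) + (p + 1) + n - 1 ≠ 0))
          (by exact_mod_cast (by omega : (a : ℤ) + (a + 1) + n - 1 ≠ 0))) key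
    have h := ht.rel₁ (a + 1) p (by omega) (by omega)
    rw [Nat.add_sub_cancel, hleft] at h
    push_cast at h
    have key : (2 * ((a : ℂ) + 1) + n - 2) * ((p : ℂ) - j) * t (a + 1) p = 0 := by
      linear_combination h
    exact eq_zero_of_ne_zero_of_mul_left_eq_zero
      (mul_ne_zero (by exact_mod_cast (by omega : 2 * ((a : ℤ) + 1) + n - 2 ≠ 0))
        (by exact_mod_cast (by omega : (p : ℤ) - j ≠ 0))) key

theorem apply_eq_zero_of_le_i {A : ℕ} (hA : A ≤ i) (q : ℕ) : t A q = 0 := by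
  induction A using Nat.strong_decreasing_induction generalizing q with
  | base => exact ⟨i, fun A hA hle => absurd hle (by omega)⟩
  | step A ih =>
    rcases hA.eq_or_lt with rfl | hA
    · exact ht.apply_i_eq_zero hn hji hpar q
    by_cases hq : A < q ∨ (A + q) % 2 = 1
    · exact ht.support _ _ hq
    have h := ht.rel₂ A q (by omega) (by omega)
    have hnext : ((A : ℂ) + 1 - i) * t (A + 2) q = 0 := by
      by_cases hA2 : A + 2 ≤ i
      · rw [ih (A + 2) (by omega) hA2 q, mul_zero]
      · rw [show (i : ℂ) = A + 1 by exact_mod_cast (by omega : i = A + 1)]; ring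
    rw [ih (A + 1) (by omega) (by omega) (q + 1)] at h
    have key : ((A : ℂ) + q + n - 1) * ((A : ℂ) + i + n - 1) * t A q = 0 := by
      linear_combination -h + ((A : ℂ) - q + 1) * hnext
    exact eq_zero_of_ne_zero_of_mul_left_eq_zero
      (mul_ne_zero (by exact_mod_cast (by omega : (A : ℤ) + q + n - 1 ≠ 0))
        (by exact_mod_cast (by omega : (A : ℤ) + i + n - 1 ≠ 0))) key

theorem apply_succ_i_rel {p : ℕ} (hp : p < i) (hev : (i + p) % 2 = 1) :
    ((i : ℂ) - p) * ((p : ℂ) - j) * t (i + 1) p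
      + ((i : ℂ) + p + n - 1) * ((p : ℂ) + j + n - 1) * t (i + 1) (p + 2) = 0 := by
  have hzero := ht.apply_i_eq_zero hn hji hpar (p + 1)
  have h₁ := ht.rel₁ (i + 1) p (by omega) (by omega)
  have h₂ := ht.rel₂ i (p + 1) (by omega) (by omega)
  rw [Nat.add_sub_cancel, hzero] at h₁
  rw [hzero] at h₂
  push_cast at h₁ h₂
  apply mul_left_cancel₀ (by exact_mod_cast (by omega : 2 * (i : ℤ) + n ≠ 0) : 2 * (i : ℂ) + n ≠ 0)
  linear_combination ((i : ℂ) - p) * h₁ + ((i : ℂ) + p + n - 1) * h₂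

theorem apply_succ_i_eq_zero_of_lt {q : ℕ} (hq : j < q) : t (i + 1) q = 0 := by
  induction q using Nat.strong_induction_on with
  | _ q ih =>
  by_cases hsupp : i + 1 < q ∨ (i + 1 + q) % 2 = 1
  · exact ht.support _ _ hsupp
  obtain ⟨p, rfl⟩ : ∃ p, q = p + 2 := ⟨q - 2, by omega⟩
  have hprev : ((p : ℂ) - j) * t (i + 1) p = 0 := by
    rcases (show j ≤ p by omega).eq_or_lt with rfl | hjp
    · ring
    · rw [ih p (by omega) hjp, mul_zero]
  have key : ((i : ℂ) + p + n - 1) * ((p : ℂ) + j + n - 1) * t (i + 1) (p + 2) = 0 := by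
    linear_combination ht.apply_succ_i_rel hn hji hpar (p := p) (by omega) (by omega)
      - ((i : ℂ) - p) * hprev
  exact eq_zero_of_ne_zero_of_mul_left_eq_zero
    (mul_ne_zero (by exact_mod_cast (by omega : (i : ℤ) + p + n - 1 ≠ 0))
      (by exact_mod_cast (by omega : (p : ℤ) + j + n - 1 ≠ 0))) key

theorem apply_succ_i_eq_zero (h₀ : t (i + 1) j = 0) (q : ℕ) : t (i + 1) q = 0 := by
  induction q using Nat.strong_decreasing_induction with
  | base => exact ⟨j, fun q hq => ht.apply_succ_i_eq_zero_of_lt hn hji hpar hq⟩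
  | step q ih =>
    rcases lt_trichotomy q j with hqj | rfl | hjq
    · by_cases hodd : (i + 1 + q) % 2 = 1
      · exact ht.support _ _ (Or.inr hodd)
      have key : ((i : ℂ) - q) * ((q : ℂ) - j) * t (i + 1) q = 0 := by
        linear_combination ht.apply_succ_i_rel hn hji hpar (p := q) (by omega) (by omega)
          - ((i : ℂ) + q + n - 1) * ((q : ℂ) + j + n - 1) * ih (q + 2) (by omega)
      exact eq_zero_of_ne_zero_of_mul_left_eq_zero
        (mul_ne_zero (by exact_mod_cast (by omega : (i : ℤ) - q ≠ 0))
          (by exact_mod_cast (by omega : (q : ℤ) - j ≠ 0))) key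
    · exact h₀
    · exact ht.apply_succ_i_eq_zero_of_lt hn hji hpar hjq

theorem apply_eq_zero_of_succ_i {m : ℕ} (hm : m ≤ i + 1)
    (hcol : ∀ q, m ≤ q → t (i + 1) q = 0) (A : ℕ) : ∀ q, m ≤ q → t A q = 0 := by
  induction A using Nat.strong_induction_on with
  | _ A ih =>
  intro q hq
  by_cases hAi : A ≤ i
  · exact ht.apply_eq_zero_of_le_i hn hji hpar hAi q
  by_cases hAi' : A = i + 1
  · exact hAi' ▸ hcol q hq
  obtain ⟨b, rfl⟩ : ∃ b, A = b + 2 := ⟨A - 2, by omega⟩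
  by_cases hsupp : b + 2 < q ∨ (b + q) % 2 = 1
  · exact ht.support _ _ (by omega)
  by_cases hdiag : q = b + 2
  · subst hdiag
    have h := ht.rel₁ (b + 1) (b + 1) le_rfl (by omega)
    rw [ih (b + 1) (by omega) (b + 1) (by omega)] at h
    push_cast at h
    have key : ((b : ℂ) + 1 + (b + 1) + n - 2) * ((b : ℂ) + 1 - i) * t (b + 2) (b + 2) = 0 := by
      linear_combination -h
    exact eq_zero_of_ne_zero_of_mul_left_eq_zero
      (mul_ne_zero (by exact_mod_cast (by omega : (b : ℤ) + 1 + (b + 1) + n - 2 ≠ 0))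
        (by exact_mod_cast (by omega : (b : ℤ) + 1 - i ≠ 0))) key
  have h := ht.rel₂ b q (by omega) (by omega)
  rw [ih (b + 1) (by omega) (q + 1) (by omega), ih b (by omega) q hq] at h
  have key : ((b : ℂ) - q + 1) * ((b : ℂ) + 1 - i) * t (b + 2) q = 0 := by
    linear_combination h
  exact eq_zero_of_ne_zero_of_mul_left_eq_zero
    (mul_ne_zero (by exact_mod_cast (by omega : (b : ℤ) - q + 1 ≠ 0))
      (by exact_mod_cast (by omega : (b : ℤ) + 1 - i ≠ 0))) key

theorem apply_eq_zero_of_j_lt {q : ℕ} (hq : j < q) (A : ℕ) : t A q = 0 :=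
  ht.apply_eq_zero_of_succ_i hn hji hpar (m := j + 1) (by omega)
    (fun _ hq' => ht.apply_succ_i_eq_zero_of_lt hn hji hpar hq') A q hq

theorem eq_zero_of_apply_succ_i_j (h₀ : t (i + 1) j = 0) : t = 0 := by
  funext A q
  exact ht.apply_eq_zero_of_succ_i hn hji hpar (Nat.zero_le _)
    (fun q _ => ht.apply_succ_i_eq_zero hn hji hpar h₀ q) A q (Nat.zero_le _)

end IsReducedSolution

/-- `baseColumn n i j c m` is the entry at `(i + 1, j - 2 m)` of the solution with value `c`
at `(i + 1, j)`; the quotient is `apply_succ_i_rel` solved for the lower entry. -/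
def baseColumn (n i j : ℕ) (c : ℂ) : ℕ → ℂ
  | 0 => c
  | m + 1 => ((i : ℂ) + j + n - 3 - 2 * m) * (2 * (j : ℂ) + n - 3 - 2 * m)
      / (((i : ℂ) - j + 2 + 2 * m) * (2 * m + 2)) * baseColumn n i j c m

/-- Column `i + 1` is `baseColumn`; each later column `a + 2` is `rel₂` solved for `t (a + 2) q`. -/
def solution (n i j : ℕ) (c : ℂ) : ℕ → ℕ → ℂ
  | 0, _ => 0
  | 1, _ => 0
  | a + 2, q =>
    if a + 2 ≤ i ∨ j < q ∨ (a + q) % 2 = 1 then 0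
    else if a + 1 = i then baseColumn n i j c ((j - q) / 2)
    else (((a : ℂ) + q + n - 1) * ((a : ℂ) + i + n - 1) * solution n i j c a q
        - (2 * (a : ℂ) + n) * ((q : ℂ) + j + n - 2) * solution n i j c (a + 1) (q + 1))
      / (((a : ℂ) - q + 1) * ((a : ℂ) + 1 - i))

section solution

variable {n i j : ℕ} {c : ℂ}

theorem solution_eq_zero {a q : ℕ} (h : a ≤ i ∨ j < q ∨ (a + q) % 2 = 1) :
    solution n i j c a q = 0 := by
  match a with
  | 0 => rfl
  | 1 => rfl
  | a + 2 =>
    rw [solution, if_pos (by omega)]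

theorem solution_succ_i (hji : j < i) {q : ℕ} (hq : q ≤ j) (hodd : (i + q) % 2 = 1) :
    solution n i j c (i + 1) q = baseColumn n i j c ((j - q) / 2) := by
  obtain ⟨a, rfl⟩ : ∃ a, i = a + 1 := ⟨i - 1, by omega⟩
  rw [solution, if_neg (by omega), if_pos rfl]

theorem solution_succ_i_j (hji : j < i) (hpar : (i + j) % 2 = 1) :
    solution n i j c (i + 1) j = c := by
  rw [solution_succ_i hji le_rfl hpar, Nat.sub_self, Nat.zero_div, baseColumn]

theorem solution_succ_i_rel (hji : j < i) (hpar : (i + j) % 2 = 1) (p : ℕ) :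
    ((i : ℂ) - p) * ((p : ℂ) - j) * solution n i j c (i + 1) p
      + ((i : ℂ) + p + n - 1) * ((p : ℂ) + j + n - 1) * solution n i j c (i + 1) (p + 2) = 0 := by
  by_cases hzero : j < p ∨ (i + p) % 2 = 0
  · rw [solution_eq_zero (a := i + 1) (q := p) (by omega),
      solution_eq_zero (a := i + 1) (q := p + 2) (by omega)]
    ring
  obtain rfl | hpj := eq_or_ne p j
  · rw [solution_eq_zero (a := i + 1) (q := p + 2) (by omega)]
    ring
  obtain ⟨m, rfl⟩ : ∃ m, j = p + 2 * m + 2 := ⟨(j - p) / 2 - 1, by omega⟩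
  rw [solution_succ_i hji (by omega) (by omega), solution_succ_i hji (by omega) (by omega),
    show (p + 2 * m + 2 - p) / 2 = m + 1 by omega, show (p + 2 * m + 2 - (p + 2)) / 2 = m by omega,
    baseColumn]
  push_cast
  have hd₁ : (i : ℂ) - (p + 2 * m + 2) + 2 + 2 * m ≠ 0 := by
    exact_mod_cast (by omega : (i : ℤ) - (p + 2 * m + 2) + 2 + 2 * m ≠ 0)
  have hd₂ : 2 * (m : ℂ) + 2 ≠ 0 := by exact_mod_cast (by omega : 2 * (m : ℤ) + 2 ≠ 0)
  field_simp
  ring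

theorem solution_rel₂ (hji : j < i) (a q : ℕ) :
    (2 * (a : ℂ) + n) * ((q : ℂ) + j + n - 2) * solution n i j c (a + 1) (q + 1)
      + ((a : ℂ) - q + 1) * ((a : ℂ) + 1 - i) * solution n i j c (a + 2) q
      = ((a : ℂ) + q + n - 1) * ((a : ℂ) + i + n - 1) * solution n i j c a q := by
  by_cases hai : a < i
  · rw [solution_eq_zero (a := a + 1) (by omega), solution_eq_zero (a := a) (by omega)]
    by_cases ha : a + 2 ≤ i
    · rw [solution_eq_zero (a := a + 2) (by omega)]; ring
    · rw [show (i : ℂ) = a + 1 by exact_mod_cast (by omega : i = a + 1)]; ring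
  by_cases hzero : j < q ∨ (a + q) % 2 = 1
  · rw [solution_eq_zero (a := a + 1) (by omega), solution_eq_zero (a := a) (by omega),
      solution_eq_zero (a := a + 2) (by omega)]
    ring
  rw [solution.eq_3, if_neg (by omega), if_neg (by omega)]
  have hd₁ : (a : ℂ) - q + 1 ≠ 0 := by exact_mod_cast (by omega : (a : ℤ) - q + 1 ≠ 0)
  have hd₂ : (a : ℂ) + 1 - i ≠ 0 := by exact_mod_cast (by omega : (a : ℤ) + 1 - i ≠ 0)
  field_simp
  ring

/-- The combination of (R1) at `(a + 2, p)` and (R2) at `(a + 1, p + 1)` that no longer involves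
column `a + 3`; it is propagated from column to column by `solution_rel₂`. -/
theorem solution_col_rel (hji : j < i) (hpar : (i + j) % 2 = 1) (a : ℕ) : ∀ p : ℕ,
    ((a : ℂ) - p + 1) * ((p : ℂ) - j) * solution n i j c (a + 2) p
      + ((a : ℂ) + p + n) * ((p : ℂ) + j + n - 1) * solution n i j c (a + 2) (p + 2)
      = (2 * (p : ℂ) + n - 1) * ((a : ℂ) + i + n) * solution n i j c (a + 1) (p + 1) := by
  induction a using Nat.strong_induction_on with
  | _ a ih =>
  intro p
  by_cases ha : a + 2 ≤ i
  · rw [solution_eq_zero (a := a + 2) (q := p) (by omega),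
      solution_eq_zero (a := a + 2) (q := p + 2) (by omega),
      solution_eq_zero (a := a + 1) (by omega)]
    ring
  by_cases ha' : a + 1 = i
  · subst ha'
    have h := solution_succ_i_rel (n := n) (c := c) hji hpar p
    rw [solution_eq_zero (a := a + 1) (by omega)]
    push_cast at h ⊢
    linear_combination h
  by_cases hjp : j ≤ p
  · rw [solution_eq_zero (a := a + 2) (q := p + 2) (by omega),
      solution_eq_zero (a := a + 1) (by omega)]
    obtain rfl | hjp := hjp.eq_or_lt
    · ring
    · rw [solution_eq_zero (a := a + 2) (q := p) (by omega)]; ring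
  obtain ⟨e, rfl⟩ : ∃ e, a = e + 2 := ⟨a - 2, by omega⟩
  have r₁ := solution_rel₂ (n := n) (c := c) hji (e + 2) p
  have r₂ := solution_rel₂ (n := n) (c := c) hji (e + 2) (p + 2)
  have r₃ := solution_rel₂ (n := n) (c := c) hji (e + 1) (p + 1)
  have ih₁ := ih (e + 1) (by omega) (p + 1)
  have ih₂ := ih e (by omega) p
  push_cast at r₁ r₂ r₃ ih₁ ih₂ ⊢
  have hd₁ : (e : ℂ) - p + 1 ≠ 0 := by exact_mod_cast (by omega : (e : ℤ) - p + 1 ≠ 0)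
  have hd₂ : (e : ℂ) + 3 - i ≠ 0 := by exact_mod_cast (by omega : (e : ℤ) + 3 - i ≠ 0)
  apply mul_left_cancel₀ (mul_ne_zero hd₁ hd₂)
  linear_combination ((p : ℂ) - j) * ((e : ℂ) - p + 1) * r₁
    + ((e : ℂ) + p + n + 2) * ((p : ℂ) + j + n - 1) * r₂
    - ((e : ℂ) + i + n + 1) * (2 * (p : ℂ) + n - 1) * r₃
    - (2 * (e : ℂ) + n + 4) * ((p : ℂ) + j + n - 1) * ih₁
    + ((e : ℂ) + i + n + 1) * ((e : ℂ) + p + n + 1) * ih₂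

theorem solution_rel₁ (hji : j < i) (hpar : (i + j) % 2 = 1) (A p : ℕ) :
    (2 * (A : ℂ) + n - 2) * ((p : ℂ) - j) * solution n i j c A p
      = ((A : ℂ) + p + n - 2) * ((A : ℂ) - i) * solution n i j c (A + 1) (p + 1)
        - ((A : ℂ) - p) * ((A : ℂ) + i + n - 2) * solution n i j c (A - 1) (p + 1) := by
  by_cases hAi : A ≤ i
  · rw [solution_eq_zero (a := A) (by omega), solution_eq_zero (a := A - 1) (by omega)]
    obtain rfl | hAi := hAi.eq_or_lt
    · ring
    · rw [solution_eq_zero (a := A + 1) (by omega)]; ring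
  by_cases hjp : j ≤ p
  · rw [solution_eq_zero (a := A + 1) (q := p + 1) (by omega),
      solution_eq_zero (a := A - 1) (q := p + 1) (by omega)]
    obtain rfl | hjp := hjp.eq_or_lt
    · ring
    · rw [solution_eq_zero (a := A) (q := p) (by omega)]; ring
  obtain ⟨e, rfl⟩ : ∃ e, A = e + 2 := ⟨A - 2, by omega⟩
  have hcol := solution_col_rel (n := n) (c := c) hji hpar e p
  have hrel₂ := solution_rel₂ (n := n) (c := c) hji (e + 1) (p + 1)
  rw [show e + 2 - 1 = e + 1 from rfl]
  push_cast at hcol hrel₂ ⊢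
  have hd : (e : ℂ) - p + 1 ≠ 0 := by exact_mod_cast (by omega : (e : ℤ) - p + 1 ≠ 0)
  apply mul_left_cancel₀ hd
  linear_combination (2 * (e : ℂ) + n + 2) * hcol - ((e : ℂ) + p + n) * hrel₂

theorem isReducedSolution_solution (hji : j < i) (hpar : (i + j) % 2 = 1) :
    IsReducedSolution n i j (solution n i j c) where
  support _ _ h := solution_eq_zero (by omega)
  rel₁ A p _ _ := solution_rel₁ hji hpar A p
  rel₂ a q _ _ := solution_rel₂ hji a q

end solution

theorem statement4 (n : ℕ) (hn : 3 ≤ n) (i j : ℕ) (hij : ∃ k : ℕ, i = j + 2*k + 1)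
    (r r' : ℂ) (hr : r = -rho n - (i : ℂ)) (hr' : r' = -rho' n - (j : ℂ)) :
    (∀ t : ℕ → ℕ → ℂ, IsAdmissible n r r' t →
      ∀ α α' : ℕ, (α ≤ i ∨ j < α') → t α α' = 0) ∧
    (∀ c : ℂ, ∃! t : ℕ → ℕ → ℂ, IsAdmissible n r r' t ∧ t (i + 1) j = c) := by
  obtain ⟨k, hk⟩ := hij
  have hji : j < i := by omega
  have hpar : (i + j) % 2 = 1 := by omega
  subst hr hr'
  simp only [isAdmissible_iff]
  refine ⟨fun t ht α α' h => ?_, fun c => ⟨solution n i j c, ?_, ?_⟩⟩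
  · rcases h with hα | hα'
    · exact ht.apply_eq_zero_of_le_i hn hji hpar hα α'
    · exact ht.apply_eq_zero_of_j_lt hn hji hpar hα' α
  · exact ⟨isReducedSolution_solution hji hpar, solution_succ_i_j hji hpar⟩
  · rintro t ⟨ht, htc⟩
    have hdiff := ht.sub (isReducedSolution_solution (c := c) hji hpar)
    refine sub_eq_zero.mp (hdiff.eq_zero_of_apply_succ_i_j hn hji hpar ?_)
    rw [Pi.sub_apply, Pi.sub_apply, htc, solution_succ_i_j hji hpar, sub_self]

end
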